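/- Let Λ₀ be a vertex lattice of type 0 in C with an O_F-basis {w₀, w₁} satisfying h(w₀,w₀) = h(w₁,w₁) = 0 and h(w₀,w₁) = 1. Then there are exactly two vertex lattices of type 2 containing Λ₀, namely Λ₂ = O_F·π⁻¹w₀ + O_F·w₁ and Λ₂' = O_F·w₀ + O_F·π⁻¹w₁. -/
import Mathlib


noncomputable section

attribute [local instance] Classical.propDecidable

variable {F : Type} [Field F]

/-- Membership in the valuation ring `O_F = {x : F | x = 0 ∨ v x ≥ 0}`. -/
def inO (v : F → ℤ) (x : F) : Prop := x = 0 ∨ 0 ≤ v x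

/-- The Hermitian form `h(x, y) = x₁ · σ(y₂) + x₂ · σ(y₁)` on `C = F²`. -/
def herm (σ : F →+* F) (x y : F × F) : F := x.1 * σ y.2 + x.2 * σ y.1

/-- The `O_F`-span of two vectors of `C = F²`. -/
def spanL (v : F → ℤ) (u w : F × F) : Set (F × F) :=
  {x | ∃ a b : F, inO v a ∧ inO v b ∧ x = a • u + b • w}

/-- An `O_F`-lattice in `C`: a free rank-2 `O_F`-submodule spanning `C` over `F`. -/
def IsLattice (v : F → ℤ) (Λ : Set (F × F)) : Prop :=
  ∃ u w : F × F, LinearIndependent F ![u, w] ∧ Λ = spanL v u w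

/-- The dual lattice `Λ^♯ = {x ∈ C | h(x, Λ) ⊆ O_F}`. -/
def dualL (σ : F →+* F) (v : F → ℤ) (Λ : Set (F × F)) : Set (F × F) :=
  {x | ∀ y ∈ Λ, inO v (herm σ x y)}

/-- A vertex lattice of type 0: a self-dual lattice. -/
def IsVertex0 (σ : F →+* F) (v : F → ℤ) (Λ : Set (F × F)) : Prop :=
  IsLattice v Λ ∧ dualL σ v Λ = Λ

/-- A vertex lattice of type 2: a lattice with `Λ^♯ = π Λ`
(equivalently `πΛ ⊆ Λ^♯ ⊆ Λ` with `Λ/Λ^♯` two-dimensional over the residue field). -/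
def IsVertex2 (σ : F →+* F) (π : F) (v : F → ℤ) (Λ : Set (F × F)) : Prop :=
  IsLattice v Λ ∧ dualL σ v Λ = (fun x => π • x) '' Λ

/-- A vertex lattice (of type 0 or type 2). -/
def IsVertex (σ : F →+* F) (π : F) (v : F → ℤ) (Λ : Set (F × F)) : Prop :=
  IsVertex0 σ v Λ ∨ IsVertex2 σ π v Λ

/-- `nIs π b Λ n` says that `n = n(b, Λ)` is the largest integer `m` with `π⁻ᵐ b ∈ Λ`. -/
def nIs (π : F) (b : F × F) (Λ : Set (F × F)) (n : ℤ) : Prop :=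
  IsGreatest {m : ℤ | (π ^ (-m)) • b ∈ Λ} n

/-- Adjacency of type-2 vertex lattices: distinct, with intersection a type-0 vertex lattice. -/
def AdjV (σ : F →+* F) (π : F) (v : F → ℤ) (Λ Λ' : Set (F × F)) : Prop :=
  IsVertex2 σ π v Λ ∧ IsVertex2 σ π v Λ' ∧ Λ ≠ Λ' ∧ IsVertex0 σ v (Λ ∩ Λ')

/-- There is a walk of length `k` between `Λ` and `Λ'` in the Bruhat–Tits tree. -/
def WalkN (σ : F →+* F) (π : F) (v : F → ℤ) (k : ℕ) (Λ Λ' : Set (F × F)) : Prop :=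
  ∃ f : ℕ → Set (F × F), f 0 = Λ ∧ f k = Λ' ∧ ∀ i < k, AdjV σ π v (f i) (f (i + 1))

/-- `dGIs σ π v Λ Λ' k` : the graph distance `d_G(Λ, Λ')` equals `k`. -/
def dGIs (σ : F →+* F) (π : F) (v : F → ℤ) (Λ Λ' : Set (F × F)) (k : ℕ) : Prop :=
  IsLeast {j : ℕ | WalkN σ π v j Λ Λ'} k

/-- `P` is a type-2 "hull" of the vertex lattice `Λ`: `P = Λ` when `Λ` has type 2,
and `P` is a type-2 vertex lattice containing `Λ` when `Λ` has type 0. -/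
def HullOf (σ : F →+* F) (π : F) (v : F → ℤ) (Λ P : Set (F × F)) : Prop :=
  (IsVertex2 σ π v Λ ∧ P = Λ) ∨ (IsVertex0 σ v Λ ∧ IsVertex2 σ π v P ∧ Λ ⊆ P)

/-- `DTwice σ π v Λ Λ' m` : twice the tree distance `D(Λ, Λ')` equals `m`
(type-0 vertex lattices are midpoints of edges, contributing `1/2` each). -/
def DTwice (σ : F →+* F) (π : F) (v : F → ℤ) (Λ Λ' : Set (F × F)) (m : ℕ) : Prop :=
  (Λ = Λ' ∧ m = 0) ∨
  (Λ ≠ Λ' ∧ ∃ k : ℕ,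
    IsLeast {j : ℕ | ∃ P Q, HullOf σ π v Λ P ∧ HullOf σ π v Λ' Q ∧ WalkN σ π v j P Q} k ∧
    (m : ℤ) = 2 * k + (if IsVertex0 σ v Λ then 1 else 0) +
      (if IsVertex0 σ v Λ' then 1 else 0))

/-- `g ∈ GL₂(O_F)`. -/
def InGL2O (v : F → ℤ) (g : Matrix (Fin 2) (Fin 2) F) : Prop :=
  (∀ i j, inO v (g i j)) ∧
    ∃ g' : Matrix (Fin 2) (Fin 2) F, (∀ i j, inO v (g' i j)) ∧ g * g' = 1 ∧ g' * g = 1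

/-- Equivalence of Hermitian matrices: `T ≈ T'` iff `gᵗ T ḡ = T'` for some `g ∈ GL₂(O_F)`. -/
def HermEquiv (σ : F →+* F) (v : F → ℤ) (T T' : Matrix (Fin 2) (Fin 2) F) : Prop :=
  ∃ g, InGL2O v g ∧ g.transpose * T * g.map (fun x => σ x) = T'

/-- `u` is a unit of `O_{F₀}`. -/
def IsUnitO₀ (σ : F →+* F) (v : F → ℤ) (u : F) : Prop :=
  σ u = u ∧ u ≠ 0 ∧ v u = 0

/-- `x` is a norm from `F^×`. -/
def IsNorm (σ : F →+* F) (x : F) : Prop := ∃ y : F, y ≠ 0 ∧ x = y * σ y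


/-! ### Auxiliary lemmas -/

section AuxV

variable {v : F → ℤ} {σ : F →+* F}

lemma aux_v1 (hvmul : ∀ x y : F, x ≠ 0 → y ≠ 0 → v (x * y) = v x + v y) : v (1 : F) = 0 := by
  have h := hvmul 1 1 one_ne_zero one_ne_zero
  rw [mul_one] at h; omega

lemma aux_vneg (hvmul : ∀ x y : F, x ≠ 0 → y ≠ 0 → v (x * y) = v x + v y)
    {x : F} (hx : x ≠ 0) : v (-x) = v x := by
  have h1 : v ((-1 : F) * -1) = v (-1 : F) + v (-1 : F) :=
    hvmul _ _ (by norm_num) (by norm_num)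
  rw [neg_mul_neg, one_mul, aux_v1 hvmul] at h1
  have h2 : v ((-1 : F) * x) = v (-1 : F) + v x := hvmul _ _ (by norm_num) hx
  rw [neg_one_mul] at h2
  omega

lemma aux_vinv (hvmul : ∀ x y : F, x ≠ 0 → y ≠ 0 → v (x * y) = v x + v y)
    {x : F} (hx : x ≠ 0) : v x⁻¹ = - v x := by
  have h := hvmul x x⁻¹ hx (inv_ne_zero hx)
  rw [mul_inv_cancel₀ hx, aux_v1 hvmul] at h
  omega

lemma inO_zero : inO v (0 : F) := Or.inl rfl

lemma inO_one (hvmul : ∀ x y : F, x ≠ 0 → y ≠ 0 → v (x * y) = v x + v y) : inO v (1 : F) :=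
  Or.inr (le_of_eq (aux_v1 hvmul).symm)

lemma inO_mul (hvmul : ∀ x y : F, x ≠ 0 → y ≠ 0 → v (x * y) = v x + v y)
    {x y : F} (hx : inO v x) (hy : inO v y) : inO v (x * y) := by
  by_cases h0 : x = 0; · left; simp [h0]
  by_cases h1 : y = 0; · left; simp [h1]
  right
  rw [hvmul x y h0 h1]
  rcases hx with rfl | hx; · exact absurd rfl h0
  rcases hy with rfl | hy; · exact absurd rfl h1
  omega

lemma inO_add (hvadd : ∀ x y : F, x ≠ 0 → y ≠ 0 → x + y ≠ 0 → min (v x) (v y) ≤ v (x + y))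
    {x y : F} (hx : inO v x) (hy : inO v y) : inO v (x + y) := by
  by_cases h0 : x = 0; · simpa [h0] using hy
  by_cases h1 : y = 0; · simpa [h1] using hx
  by_cases h2 : x + y = 0; · exact Or.inl h2
  right
  have hm := hvadd x y h0 h1 h2
  rcases hx with rfl | hx; · exact absurd rfl h0
  rcases hy with rfl | hy; · exact absurd rfl h1
  omega

lemma inO_neg (hvmul : ∀ x y : F, x ≠ 0 → y ≠ 0 → v (x * y) = v x + v y)
    {x : F} (hx : inO v x) : inO v (-x) := by
  by_cases h0 : x = 0; · left; simp [h0]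
  rcases hx with rfl | hx; · exact absurd rfl h0
  right; rw [aux_vneg hvmul h0]; exact hx

lemma inO_sigma (hvσ : ∀ x, v (σ x) = v x) {x : F} (hx : inO v x) : inO v (σ x) := by
  rcases hx with rfl | hx
  · left; exact map_zero σ
  · right; rw [hvσ]; exact hx

end AuxV

section AuxHerm

variable {σ : F →+* F} {v : F → ℤ}

lemma herm_zero_left (y : F × F) : herm σ 0 y = 0 := by simp [herm]

lemma herm_add_left (x y z : F × F) : herm σ (x + y) z = herm σ x z + herm σ y z := by
  simp only [herm, Prod.fst_add, Prod.snd_add]; ring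

lemma herm_add_right (x y z : F × F) : herm σ x (y + z) = herm σ x y + herm σ x z := by
  simp only [herm, Prod.fst_add, Prod.snd_add, map_add]; ring

lemma herm_smul_left (c : F) (x y : F × F) : herm σ (c • x) y = c * herm σ x y := by
  simp only [herm, Prod.smul_fst, Prod.smul_snd, smul_eq_mul]; ring

lemma herm_smul_right (c : F) (x y : F × F) : herm σ x (c • y) = σ c * herm σ x y := by
  simp only [herm, Prod.smul_fst, Prod.smul_snd, smul_eq_mul, map_mul]; ring

lemma herm_conj (hinv : ∀ x, σ (σ x) = x) (x y : F × F) :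
    σ (herm σ x y) = herm σ y x := by
  simp only [herm, map_add, map_mul, hinv]; ring

variable {w₀ w₁ : F × F}

lemma pair1 (h01 : herm σ w₀ w₁ = 1) (h11 : herm σ w₁ w₁ = 0) (a b : F) :
    herm σ (a • w₀ + b • w₁) w₁ = a := by
  rw [herm_add_left, herm_smul_left, herm_smul_left, h01, h11]; ring

lemma pair0 (hinv : ∀ x, σ (σ x) = x) (h00 : herm σ w₀ w₀ = 0) (h01 : herm σ w₀ w₁ = 1)
    (a b : F) : herm σ (a • w₀ + b • w₁) w₀ = b := by
  have h10 : herm σ w₁ w₀ = 1 := by rw [← herm_conj hinv, h01, map_one]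
  rw [herm_add_left, herm_smul_left, herm_smul_left, h00, h10]; ring

lemma hW (hinv : ∀ x, σ (σ x) = x) (h00 : herm σ w₀ w₀ = 0) (h11 : herm σ w₁ w₁ = 0)
    (h01 : herm σ w₀ w₁ = 1) (a b c d : F) :
    herm σ (a • w₀ + b • w₁) (c • w₀ + d • w₁) = a * σ d + b * σ c := by
  have h10 : herm σ w₁ w₀ = 1 := by rw [← herm_conj hinv, h01, map_one]
  simp only [herm_add_left, herm_add_right, herm_smul_left, herm_smul_right,
    h00, h11, h01, h10]
  ring

lemma coord (hinv : ∀ x, σ (σ x) = x) (hind : LinearIndependent F ![w₀, w₁])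
    (h00 : herm σ w₀ w₀ = 0) (h11 : herm σ w₁ w₁ = 0) (h01 : herm σ w₀ w₁ = 1)
    (z : F × F) : z = herm σ z w₁ • w₀ + herm σ z w₀ • w₁ := by
  have hcard : Fintype.card (Fin 2) = Module.finrank F (F × F) := by
    simp [Module.finrank_prod]
  let B := basisOfLinearIndependentOfCardEqFinrank hind hcard
  have hB : ⇑B = ![w₀, w₁] := coe_basisOfLinearIndependentOfCardEqFinrank hind hcard
  have hz : z = B.repr z 0 • w₀ + B.repr z 1 • w₁ := by
    have hsum := B.sum_repr z
    rw [Fin.sum_univ_two, hB] at hsum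
    simpa using hsum.symm
  have e1 : herm σ z w₁ = B.repr z 0 := by
    conv_lhs => rw [hz]
    exact pair1 h01 h11 _ _
  have e0 : herm σ z w₀ = B.repr z 1 := by
    conv_lhs => rw [hz]
    exact pair0 hinv h00 h01 _ _
  rw [e1, e0]; exact hz

end AuxHerm

section AuxSpan

variable {v : F → ℤ} {σ : F →+* F}

lemma spanL_comm (u w : F × F) : spanL v u w = spanL v w u := by
  ext x
  constructor <;> rintro ⟨a, b, ha, hb, rfl⟩ <;> exact ⟨b, a, hb, ha, add_comm _ _⟩

lemma spanL_closed (hvmul : ∀ x y : F, x ≠ 0 → y ≠ 0 → v (x * y) = v x + v y)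
    (hvadd : ∀ x y : F, x ≠ 0 → y ≠ 0 → x + y ≠ 0 → min (v x) (v y) ≤ v (x + y))
    {u w x y : F × F} (hx : x ∈ spanL v u w) (hy : y ∈ spanL v u w)
    {c d : F} (hc : inO v c) (hd : inO v d) : c • x + d • y ∈ spanL v u w := by
  obtain ⟨a1, b1, ha1, hb1, rfl⟩ := hx
  obtain ⟨a2, b2, ha2, hb2, rfl⟩ := hy
  refine ⟨c * a1 + d * a2, c * b1 + d * b2,
    inO_add hvadd (inO_mul hvmul hc ha1) (inO_mul hvmul hd ha2),
    inO_add hvadd (inO_mul hvmul hc hb1) (inO_mul hvmul hd hb2), ?_⟩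
  simp only [smul_add, smul_smul, add_smul]
  abel

lemma mem_dual_span (hvmul : ∀ x y : F, x ≠ 0 → y ≠ 0 → v (x * y) = v x + v y)
    (hvadd : ∀ x y : F, x ≠ 0 → y ≠ 0 → x + y ≠ 0 → min (v x) (v y) ≤ v (x + y))
    (hvσ : ∀ x, v (σ x) = v x) (u w z : F × F) :
    z ∈ dualL σ v (spanL v u w) ↔ inO v (herm σ z u) ∧ inO v (herm σ z w) := by
  constructor
  · intro h
    exact ⟨h u ⟨1, 0, inO_one hvmul, inO_zero, by simp⟩,
      h w ⟨0, 1, inO_zero, inO_one hvmul, by simp⟩⟩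
  · rintro ⟨h1, h2⟩ y ⟨a, b, ha, hb, rfl⟩
    rw [herm_add_right, herm_smul_right, herm_smul_right]
    exact inO_add hvadd (inO_mul hvmul (inO_sigma hvσ ha) h1)
      (inO_mul hvmul (inO_sigma hvσ hb) h2)

lemma mem_span_pair (hinv : ∀ x, σ (σ x) = x) {w₀ w₁ : F × F}
    (hind : LinearIndependent F ![w₀, w₁])
    (h00 : herm σ w₀ w₀ = 0) (h11 : herm σ w₁ w₁ = 0) (h01 : herm σ w₀ w₁ = 1)
    (z : F × F) :
    z ∈ spanL v w₀ w₁ ↔ inO v (herm σ z w₁) ∧ inO v (herm σ z w₀) := by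
  constructor
  · rintro ⟨a, b, ha, hb, rfl⟩
    rw [pair1 h01 h11, pair0 hinv h00 h01]
    exact ⟨ha, hb⟩
  · rintro ⟨h1, h2⟩
    exact ⟨_, _, h1, h2, coord hinv hind h00 h11 h01 z⟩

end AuxSpan

section AuxKey

variable {v : F → ℤ} {σ : F →+* F} {π : F}

lemma sig_inO (hinv : ∀ x, σ (σ x) = x) (hvσ : ∀ x, v (σ x) = v x)
    (hvadd : ∀ x y : F, x ≠ 0 → y ≠ 0 → x + y ≠ 0 → min (v x) (v y) ≤ v (x + y))
    (heven : ∀ x : F, σ x = x → x ≠ 0 → Even (v x))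
    {x : F} (hx0 : x ≠ 0) (hvx : v x = -1) : inO v (x + σ x) := by
  by_cases h0 : x + σ x = 0; · exact Or.inl h0
  right
  have hσx0 : σ x ≠ 0 := fun h => hx0 (by rw [← hinv x, h, map_zero])
  have hmin := hvadd x (σ x) hx0 hσx0 h0
  have hfix : σ (x + σ x) = x + σ x := by rw [map_add, hinv]; ring
  have hev := heven _ hfix h0
  rw [hvσ] at hmin
  obtain ⟨k, hk⟩ := hev
  omega

lemma lemA_aux (hπ : π ≠ 0) (h2 : (2 : F) ≠ 0) (hvπ : v π = 1) (hv2 : v (2 : F) = 0)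
    (hvmul : ∀ x y : F, x ≠ 0 → y ≠ 0 → v (x * y) = v x + v y)
    (hvadd : ∀ x y : F, x ≠ 0 → y ≠ 0 → x + y ≠ 0 → min (v x) (v y) ≤ v (x + y))
    {a b : F} (ha : v a = -1) (ha0 : a ≠ 0) (hb : v b = -1) (hb0 : b ≠ 0)
    (hπa : inO v (π * a)) (hπb : inO v (π * b))
    (hsa : inO v (a + σ a)) (hsb : inO v (b + σ b))
    (hzz : inO v (π * (a * σ b + b * σ a))) : False := by
  have hid : π * (2 * (a * b)) =
      (π * a) * (b + σ b) + ((π * b) * (a + σ a) + -(π * (a * σ b + b * σ a))) := by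
    ring
  have hO : inO v (π * (2 * (a * b))) := by
    rw [hid]
    exact inO_add hvadd (inO_mul hvmul hπa hsb)
      (inO_add hvadd (inO_mul hvmul hπb hsa) (inO_neg hvmul hzz))
  have hab0 : a * b ≠ 0 := mul_ne_zero ha0 hb0
  have h2ab0 : 2 * (a * b) ≠ 0 := mul_ne_zero h2 hab0
  rcases hO with h | h
  · exact mul_ne_zero hπ h2ab0 h
  · rw [hvmul _ _ hπ h2ab0, hvmul _ _ h2 hab0, hvmul _ _ ha0 hb0, hvπ, hv2, ha, hb] at h
    omega

lemma half (σ : F →+* F) (π : F) (v : F → ℤ)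
    (hinv : ∀ x, σ (σ x) = x)
    (hσπ : σ π = -π)
    (hπ : π ≠ 0)
    (h2 : (2 : F) ≠ 0)
    (hvπ : v π = 1)
    (hv2 : v (2 : F) = 0)
    (hvσ : ∀ x, v (σ x) = v x)
    (hvmul : ∀ x y : F, x ≠ 0 → y ≠ 0 → v (x * y) = v x + v y)
    (hvadd : ∀ x y : F, x ≠ 0 → y ≠ 0 → x + y ≠ 0 → min (v x) (v y) ≤ v (x + y))
    (heven : ∀ x : F, σ x = x → x ≠ 0 → Even (v x))
    (w₀ w₁ : F × F) (hind : LinearIndependent F ![w₀, w₁])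
    (h00 : herm σ w₀ w₀ = 0) (h11 : herm σ w₁ w₁ = 0) (h01 : herm σ w₀ w₁ = 1) :
    IsVertex2 σ π v (spanL v (π⁻¹ • w₀) w₁) ∧
    spanL v w₀ w₁ ⊆ spanL v (π⁻¹ • w₀) w₁ ∧
    ∀ Λ : Set (F × F), IsVertex2 σ π v Λ → spanL v w₀ w₁ ⊆ Λ →
      (∃ z₀ ∈ Λ, ¬ inO v (herm σ z₀ w₁)) → Λ = spanL v (π⁻¹ • w₀) w₁ := by
  have hπin : inO v π := Or.inr (by rw [hvπ]; norm_num)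
  have hπinv0 : (π⁻¹ : F) ≠ 0 := inv_ne_zero hπ
  have hπinvv : v (π⁻¹ : F) = -1 := by rw [aux_vinv hvmul hπ, hvπ]
  have hcoord := coord hinv hind h00 h11 h01
  have hσne : ∀ x : F, x ≠ 0 → σ x ≠ 0 :=
    fun x hx h => hx (by rw [← hinv x, h, map_zero])
  -- membership characterization of the candidate lattice
  have hmem2 : ∀ z : F × F, z ∈ spanL v (π⁻¹ • w₀) w₁ ↔
      inO v (π * herm σ z w₁) ∧ inO v (herm σ z w₀) := by
    intro z
    constructor
    · rintro ⟨a, b, ha, hb, rfl⟩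
      rw [smul_smul, pair1 h01 h11, pair0 hinv h00 h01]
      have e : π * (a * π⁻¹) = a := by field_simp
      rw [e]
      exact ⟨ha, hb⟩
    · rintro ⟨h1, h2'⟩
      refine ⟨π * herm σ z w₁, herm σ z w₀, h1, h2', ?_⟩
      rw [smul_smul]
      have e : π * herm σ z w₁ * π⁻¹ = herm σ z w₁ := by field_simp
      rw [e]
      exact hcoord z
  -- membership characterization of π times the candidate lattice
  have himg : ∀ z : F × F, z ∈ (fun x => π • x) '' spanL v (π⁻¹ • w₀) w₁ ↔
      inO v (herm σ z w₁) ∧ inO v (π⁻¹ * herm σ z w₀) := by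
    intro z
    constructor
    · rintro ⟨y, hy, rfl⟩
      rw [hmem2] at hy
      rw [herm_smul_left, herm_smul_left]
      refine ⟨hy.1, ?_⟩
      have e : π⁻¹ * (π * herm σ y w₀) = herm σ y w₀ := by field_simp
      rw [e]
      exact hy.2
    · rintro ⟨h1, h2'⟩
      refine ⟨π⁻¹ • z, ?_, ?_⟩
      · rw [hmem2, herm_smul_left, herm_smul_left]
        have e : π * (π⁻¹ * herm σ z w₁) = herm σ z w₁ := by field_simp
        rw [e]
        exact ⟨h1, h2'⟩
      · show π • π⁻¹ • z = z
        rw [smul_smul, mul_inv_cancel₀ hπ, one_smul]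
  -- the candidate lattice is a vertex lattice of type 2
  have hneg_iff : ∀ x : F, inO v (-x) ↔ inO v x :=
    fun x => ⟨fun h => by simpa using inO_neg hvmul h, inO_neg hvmul⟩
  have hvert2 : IsVertex2 σ π v (spanL v (π⁻¹ • w₀) w₁) := by
    constructor
    · refine ⟨π⁻¹ • w₀, w₁, ?_, rfl⟩
      rw [LinearIndependent.pair_iff]
      intro s t hst
      have hst' : (s * π⁻¹) • w₀ + t • w₁ = 0 := by rw [← smul_smul]; exact hst
      have e1 : s * π⁻¹ = 0 := by
        rw [← pair1 h01 h11 (s * π⁻¹) t, hst', herm_zero_left]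
      have e2 : t = 0 := by
        rw [← pair0 hinv h00 h01 (s * π⁻¹) t, hst', herm_zero_left]
      refine ⟨?_, e2⟩
      rcases mul_eq_zero.mp e1 with h | h
      · exact h
      · exact absurd h hπinv0
    · ext z
      rw [mem_dual_span hvmul hvadd hvσ, himg]
      have hσπinv : σ (π⁻¹ : F) = -π⁻¹ := by rw [map_inv₀, hσπ, inv_neg]
      rw [herm_smul_right, hσπinv, neg_mul, hneg_iff]
      tauto
  -- the original lattice is contained in the candidate
  have hsub02 : spanL v w₀ w₁ ⊆ spanL v (π⁻¹ • w₀) w₁ := by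
    rintro z ⟨a, b, ha, hb, rfl⟩
    refine ⟨π * a, b, inO_mul hvmul hπin ha, hb, ?_⟩
    rw [smul_smul]
    have e : π * a * π⁻¹ = a := by field_simp
    rw [e]
  refine ⟨hvert2, hsub02, ?_⟩
  -- uniqueness part
  intro Λ hΛ2 hsub hbad
  obtain ⟨⟨u, w, huw, hΛspan⟩, hΛdual⟩ := hΛ2
  obtain ⟨z₀, hz₀Λ, hz₀⟩ := hbad
  have hw₀Λ : w₀ ∈ Λ := hsub ⟨1, 0, inO_one hvmul, inO_zero, by simp⟩
  have hw₁Λ : w₁ ∈ Λ := hsub ⟨0, 1, inO_zero, inO_one hvmul, by simp⟩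
  have hpairΛ : ∀ z ∈ Λ, ∀ y ∈ Λ, inO v (π * herm σ z y) := by
    intro z hz y hy
    have hzmem : π • z ∈ dualL σ v Λ := by rw [hΛdual]; exact ⟨z, hz, rfl⟩
    have h := hzmem y hy
    rwa [herm_smul_left] at h
  have hclosed : ∀ x ∈ Λ, ∀ y ∈ Λ, ∀ c d : F, inO v c → inO v d → c • x + d • y ∈ Λ := by
    intro x hx y hy c d hc hd
    rw [hΛspan] at hx hy ⊢
    exact spanL_closed hvmul hvadd hx hy hc hd
  have notinO_spec : ∀ x : F, ¬ inO v x → x ≠ 0 ∧ v x < 0 := by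
    intro x hx
    constructor
    · rintro rfl; exact hx inO_zero
    · by_contra h
      push_neg at h
      exact hx (Or.inr h)
  have vm1 : ∀ x : F, ¬ inO v x → inO v (π * x) → v x = -1 ∧ x ≠ 0 := by
    intro x hx hπx
    obtain ⟨hx0, hxv⟩ := notinO_spec x hx
    rcases hπx with h | h
    · exact absurd h (mul_ne_zero hπ hx0)
    · rw [hvmul π x hπ hx0, hvπ] at h
      exact ⟨by omega, hx0⟩
  -- no vector with both coordinates of valuation -1
  have lemA : ∀ z ∈ Λ, inO v (herm σ z w₁) ∨ inO v (herm σ z w₀) := by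
    intro z hz
    by_contra hcon
    rw [not_or] at hcon
    obtain ⟨hA, hB⟩ := hcon
    obtain ⟨hva, ha0⟩ := vm1 _ hA (hpairΛ z hz w₁ hw₁Λ)
    obtain ⟨hvb, hb0⟩ := vm1 _ hB (hpairΛ z hz w₀ hw₀Λ)
    have hzz := hpairΛ z hz z hz
    rw [hcoord z, hW hinv h00 h11 h01] at hzz
    exact lemA_aux hπ h2 hvπ hv2 hvmul hvadd hva ha0 hvb hb0
      (hpairΛ z hz w₁ hw₁Λ) (hpairΛ z hz w₀ hw₀Λ)
      (sig_inO hinv hvσ hvadd heven ha0 hva)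
      (sig_inO hinv hvσ hvadd heven hb0 hvb) hzz
  obtain ⟨hva₀, ha₀0⟩ := vm1 _ hz₀ (hpairΛ z₀ hz₀Λ w₁ hw₁Λ)
  have hb₀O : inO v (herm σ z₀ w₀) := (lemA z₀ hz₀Λ).resolve_left hz₀
  -- Λ is contained in the candidate lattice
  have hΛsub : Λ ⊆ spanL v (π⁻¹ • w₀) w₁ := by
    intro z hz
    rw [hmem2]
    refine ⟨hpairΛ z hz w₁ hw₁Λ, ?_⟩
    by_contra hB
    obtain ⟨hvb, hb0⟩ := vm1 _ hB (hpairΛ z hz w₀ hw₀Λ)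
    have haO : inO v (herm σ z w₁) := (lemA z hz).resolve_right hB
    have hx := hpairΛ z₀ hz₀Λ z hz
    rw [hcoord z₀, hcoord z, hW hinv h00 h11 h01] at hx
    have hid : π * (herm σ z₀ w₁ * σ (herm σ z w₀)) =
        π * (herm σ z₀ w₁ * σ (herm σ z w₀) + herm σ z₀ w₀ * σ (herm σ z w₁))
        + -(π * (herm σ z₀ w₀ * σ (herm σ z w₁))) := by ring
    have hOin : inO v (π * (herm σ z₀ w₁ * σ (herm σ z w₀))) := by
      rw [hid]
      exact inO_add hvadd hx (inO_neg hvmul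
        (inO_mul hvmul hπin (inO_mul hvmul hb₀O (inO_sigma hvσ haO))))
    have hσb0 : σ (herm σ z w₀) ≠ 0 := hσne _ hb0
    rcases hOin with h | h
    · exact mul_ne_zero hπ (mul_ne_zero ha₀0 hσb0) h
    · rw [hvmul _ _ hπ (mul_ne_zero ha₀0 hσb0), hvmul _ _ ha₀0 hσb0, hvπ, hvσ,
        hva₀, hvb] at h
      omega
  -- the candidate lattice is contained in Λ
  have hπw₀Λ : π⁻¹ • w₀ ∈ Λ := by
    have hz₀eq := hcoord z₀
    set A := herm σ z₀ w₁ with hAd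
    set B := herm σ z₀ w₀ with hBd
    have hπAne : π * A ≠ 0 := mul_ne_zero hπ ha₀0
    have hval : v (π * A) = 0 := by
      rw [hvmul _ _ hπ ha₀0, hvπ, hva₀]; omega
    have hcinv : inO v (π * A)⁻¹ :=
      Or.inr (by rw [aux_vinv hvmul hπAne, hval]; omega)
    have hcd : inO v (-((π * A)⁻¹ * B)) :=
      inO_neg hvmul (inO_mul hvmul hcinv hb₀O)
    have hmem := hclosed z₀ hz₀Λ w₁ hw₁Λ (π * A)⁻¹ (-((π * A)⁻¹ * B)) hcinv hcd
    have heq : (π * A)⁻¹ • z₀ + (-((π * A)⁻¹ * B)) • w₁ = π⁻¹ • w₀ := by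
      rw [hz₀eq, smul_add, smul_smul, smul_smul]
      have hca : (π * A)⁻¹ * A = π⁻¹ := by
        rw [mul_inv, mul_assoc, inv_mul_cancel₀ ha₀0, mul_one]
      rw [hca, add_assoc, ← add_smul]
      simp
    rwa [heq] at hmem
  have hsubΛ : spanL v (π⁻¹ • w₀) w₁ ⊆ Λ := by
    rintro x ⟨a, b, ha, hb, rfl⟩
    exact hclosed _ hπw₀Λ _ hw₁Λ a b ha hb
  exact Set.Subset.antisymm hΛsub hsubΛ

end AuxKey

theorem statement1
    (σ : F →+* F) (π : F) (v : F → ℤ)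
    (hinv : ∀ x, σ (σ x) = x)
    (hσπ : σ π = -π)
    (hπ : π ≠ 0)
    (h2 : (2 : F) ≠ 0)
    (hvπ : v π = 1)
    (hv2 : v (2 : F) = 0)
    (hvσ : ∀ x, v (σ x) = v x)
    (hvmul : ∀ x y : F, x ≠ 0 → y ≠ 0 → v (x * y) = v x + v y)
    (hvadd : ∀ x y : F, x ≠ 0 → y ≠ 0 → x + y ≠ 0 → min (v x) (v y) ≤ v (x + y))
    (heven : ∀ x : F, σ x = x → x ≠ 0 → Even (v x))
    (Λ₀ : Set (F × F)) (w₀ w₁ : F × F)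
    (hind : LinearIndependent F ![w₀, w₁]) (hspan : Λ₀ = spanL v w₀ w₁)
    (h00 : herm σ w₀ w₀ = 0) (h11 : herm σ w₁ w₁ = 0) (h01 : herm σ w₀ w₁ = 1)
    (hΛ₀ : IsVertex0 σ v Λ₀) :
    IsVertex2 σ π v (spanL v (π⁻¹ • w₀) w₁) ∧
    IsVertex2 σ π v (spanL v w₀ (π⁻¹ • w₁)) ∧
    Λ₀ ⊆ spanL v (π⁻¹ • w₀) w₁ ∧
    Λ₀ ⊆ spanL v w₀ (π⁻¹ • w₁) ∧
    spanL v (π⁻¹ • w₀) w₁ ≠ spanL v w₀ (π⁻¹ • w₁) ∧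
    (∀ Λ : Set (F × F), IsVertex2 σ π v Λ → Λ₀ ⊆ Λ →
      Λ = spanL v (π⁻¹ • w₀) w₁ ∨ Λ = spanL v w₀ (π⁻¹ • w₁)) := by
  obtain ⟨H2a, Hsub_a, Hkey_a⟩ :=
    half σ π v hinv hσπ hπ h2 hvπ hv2 hvσ hvmul hvadd heven w₀ w₁ hind h00 h11 h01
  have h10 : herm σ w₁ w₀ = 1 := by rw [← herm_conj hinv, h01, map_one]
  have hind' : LinearIndependent F ![w₁, w₀] := by
    rw [LinearIndependent.pair_iff] at hind ⊢
    intro s t hst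
    have h := hind t s (by rw [add_comm]; exact hst)
    exact ⟨h.2, h.1⟩
  obtain ⟨H2b, Hsub_b, Hkey_b⟩ :=
    half σ π v hinv hσπ hπ h2 hvπ hv2 hvσ hvmul hvadd heven w₁ w₀ hind' h11 h00 h10
  have hcomm : spanL v w₀ (π⁻¹ • w₁) = spanL v (π⁻¹ • w₁) w₀ := spanL_comm _ _
  have hcomm0 : spanL v w₀ w₁ = spanL v w₁ w₀ := spanL_comm _ _
  have hπinv0 : (π⁻¹ : F) ≠ 0 := inv_ne_zero hπ
  have hπinvv : v (π⁻¹ : F) = -1 := by rw [aux_vinv hvmul hπ, hvπ]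
  refine ⟨H2a, by rw [hcomm]; exact H2b, ?_, ?_, ?_, ?_⟩
  · rw [hspan]; exact Hsub_a
  · rw [hspan, hcomm0, hcomm]; exact Hsub_b
  · intro heqq
    have hmem : π⁻¹ • w₀ ∈ spanL v (π⁻¹ • w₀) w₁ :=
      ⟨1, 0, inO_one hvmul, inO_zero, by simp⟩
    rw [heqq] at hmem
    obtain ⟨a, b, ha, hb, heqq2⟩ := hmem
    rw [smul_smul] at heqq2
    have h1 : herm σ (π⁻¹ • w₀) w₁ = π⁻¹ := by rw [herm_smul_left, h01, mul_one]
    have h2' : π⁻¹ = a := by rw [← h1, heqq2, pair1 h01 h11]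
    rcases ha with rfl | ha
    · exact hπinv0 h2'
    · rw [← h2'] at ha
      omega
  · intro Λ hΛ2 hΛ0sub
    have hbad : ∃ z₀ ∈ Λ, ¬ inO v (herm σ z₀ w₁) ∨ ¬ inO v (herm σ z₀ w₀) := by
      by_contra hcon
      push_neg at hcon
      have hΛsub0 : Λ ⊆ Λ₀ := by
        intro z hz
        rw [hspan, mem_span_pair hinv hind h00 h11 h01]
        exact hcon z hz
      have hΛeq : Λ = Λ₀ := Set.Subset.antisymm hΛsub0 hΛ0sub
      obtain ⟨hlat, hdual⟩ := hΛ2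
      rw [hΛeq, hΛ₀.2] at hdual
      have hw₀mem : w₀ ∈ Λ₀ := by
        rw [hspan]; exact ⟨1, 0, inO_one hvmul, inO_zero, by simp⟩
      rw [hdual] at hw₀mem
      obtain ⟨y, hy, hyeq⟩ := hw₀mem
      have hyeq' : π • y = w₀ := hyeq
      have hyw : y = π⁻¹ • w₀ := by
        rw [← hyeq', smul_smul, inv_mul_cancel₀ hπ, one_smul]
      rw [hyw, hspan, mem_span_pair hinv hind h00 h11 h01] at hy
      have h1 : herm σ (π⁻¹ • w₀) w₁ = π⁻¹ := by rw [herm_smul_left, h01, mul_one]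
      rcases hy.1 with h | h
      · rw [h1] at h; exact hπinv0 h
      · rw [h1, hπinvv] at h; omega
    obtain ⟨z₀, hz₀Λ, hbad'⟩ := hbad
    rcases hbad' with hb1 | hb0
    · left
      exact Hkey_a Λ hΛ2 (hspan ▸ hΛ0sub) ⟨z₀, hz₀Λ, hb1⟩
    · right
      rw [hcomm]
      refine Hkey_b Λ hΛ2 ?_ ⟨z₀, hz₀Λ, hb0⟩
      rw [← hcomm0, ← hspan]
      exact hΛ0sub
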